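/- arXiv:1804.01268 — 2 statements merged into one kernel-verified Lean document; each statement's English description precedes it below -/
import Mathlib

section
/- Let μ be a Borel probability measure on ℝ whose cumulative distribution function F(x) = μ((−∞,x]) is twice differentiable with bounded second derivative, and such that f = F′ is a density of μ. Then (1/Δ) ∫_ℝ (F(y+Δ) − F(y)) dμ(y) → ∫_ℝ f(y)² dy as Δ → 0⁺. -/
/-!
Since `f = F′` is `C`-Lipschitz, Taylor's bound `|F (y + Δ) - F y - Δ f y| ≤ C Δ²` holds uniformly
in `y`; integrating it against the probability measure `μ` gives
`(1/Δ) ∫ (F (y + Δ) - F y) dμ = ∫ f dμ + O(Δ)`, and `∫ f dμ = ∫ f²` because `f` is the density of `μ`.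
-/

open MeasureTheory Filter Set Topology ProbabilityTheory

theorem abs_sub_sub_mul_le_sq_of_lipschitz {F f : ℝ → ℝ} {C : ℝ} (hF : ∀ x, HasDerivAt F (f x) x)
    (hf : ∀ a b, |f b - f a| ≤ C * |b - a|) (y Δ : ℝ) :
    |F (y + Δ) - F y - Δ * f y| ≤ C * Δ ^ 2 := by
  have hderiv : ∀ t, HasDerivAt (fun t => F t - t * f y) (f t - f y) t := fun t =>
    (hF t).sub (hasDerivAt_mul_const (f y))
  have hbound : ∀ t ∈ uIcc y (y + Δ), ‖f t - f y‖ ≤ C * |Δ| := fun t ht => by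
    have : |t - y| ≤ |Δ| := by simpa using abs_sub_left_of_mem_uIcc ht
    have hC : 0 ≤ C := by simpa using (abs_nonneg _).trans (hf 0 1)
    exact (hf y t).trans (mul_le_mul_of_nonneg_left this hC)
  have := (convex_uIcc y (y + Δ)).norm_image_sub_le_of_norm_hasDerivWithin_le
    (fun t _ => (hderiv t).hasDerivWithinAt) hbound left_mem_uIcc right_mem_uIcc
  calc |F (y + Δ) - F y - Δ * f y| = ‖(F (y + Δ) - (y + Δ) * f y) - (F y - y * f y)‖ := by
        rw [Real.norm_eq_abs]; ring_nf
    _ ≤ C * |Δ| * ‖y + Δ - y‖ := this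
    _ = C * Δ ^ 2 := by simp [mul_assoc, ← sq]

theorem tendsto_integral_slope_of_abs_sub_sub_mul_le {μ : Measure ℝ} [IsFiniteMeasure μ]
    {F f : ℝ → ℝ} {C : ℝ}
    (hint : ∀ Δ, Integrable (fun y => F (y + Δ) - F y) μ) (hf : Integrable f μ)
    (hF : ∀ y Δ, |F (y + Δ) - F y - Δ * f y| ≤ C * Δ ^ 2) :
    Tendsto (fun Δ => (1 / Δ) * ∫ y, (F (y + Δ) - F y) ∂μ) (𝓝[≠] 0) (𝓝 (∫ y, f y ∂μ)) := by
  have hlim : Tendsto (fun Δ => C * |Δ| * μ.real univ) (𝓝[≠] 0) (𝓝 0) :=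
    tendsto_nhdsWithin_of_tendsto_nhds (Continuous.tendsto' (by fun_prop) 0 _ (by simp))
  refine tendsto_iff_norm_sub_tendsto_zero.2 (squeeze_zero_norm' ?_ hlim)
  filter_upwards [self_mem_nhdsWithin] with Δ (hΔ : Δ ≠ 0)
  have hsplit : (1 / Δ) * ∫ y, (F (y + Δ) - F y) ∂μ - ∫ y, f y ∂μ
      = (1 / Δ) * ∫ y, (F (y + Δ) - F y - Δ * f y) ∂μ := by
    rw [integral_sub (hint Δ) (hf.const_mul Δ), integral_const_mul]
    field_simp
  have hrem : ‖∫ y, (F (y + Δ) - F y - Δ * f y) ∂μ‖ ≤ C * Δ ^ 2 * μ.real univ :=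
    norm_integral_le_of_norm_le_const (.of_forall fun y => hF y Δ)
  calc ‖‖(1 / Δ) * ∫ y, (F (y + Δ) - F y) ∂μ - ∫ y, f y ∂μ‖‖
      = |Δ|⁻¹ * ‖∫ y, (F (y + Δ) - F y - Δ * f y) ∂μ‖ := by
        rw [norm_norm, hsplit, norm_mul, one_div, norm_inv, Real.norm_eq_abs]
    _ ≤ |Δ|⁻¹ * (C * Δ ^ 2 * μ.real univ) := by gcongr
    _ = C * |Δ| * μ.real univ := by
        rw [← sq_abs]; field_simp

/-- If the cdf `F` of a Borel probability measure `μ` on `ℝ` is twice differentiable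
with bounded second derivative, and `f = F′` is a density of `μ`, then
`(1/Δ) ∫ (F(y+Δ) − F(y)) dμ(y) → ∫ f(y)² dy` as `Δ → 0⁺`. -/
theorem stmt_3 (μ : Measure ℝ) [IsProbabilityMeasure μ]
    (F f : ℝ → ℝ) (hF : ∀ x, F x = (μ (Set.Iic x)).toReal)
    (hF' : ∀ x, HasDerivAt F (f x) x)
    (hf' : ∀ x, DifferentiableAt ℝ f x)
    (C : ℝ) (hC : ∀ x, |deriv f x| ≤ C)
    (hdens : μ = volume.withDensity (fun x => ENNReal.ofReal (f x))) :
    Tendsto (fun Δ : ℝ => (1 / Δ) * ∫ y, (F (y + Δ) - F y) ∂μ)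
      (nhdsWithin 0 (Set.Ioi 0)) (nhds (∫ y, (f y) ^ 2)) := by
  have hcdf : F = cdf μ := funext fun x => by rw [hF, cdf_eq_real]; rfl
  have hF01 : ∀ x, 0 ≤ F x ∧ F x ≤ 1 := fun x => hcdf ▸ ⟨cdf_nonneg μ x, cdf_le_one μ x⟩
  have hmono : Monotone F := hcdf ▸ monotone_cdf μ
  have hF_meas : Measurable F := hmono.measurable
  have hf0 : ∀ y, 0 ≤ f y := fun y => (hF' y).nonneg_of_monotone hmono
  have hLip : ∀ a b, |f b - f a| ≤ C * |b - a| := fun a b => by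
    simpa using convex_univ.norm_image_sub_le_of_norm_deriv_le (fun x _ => hf' x)
      (fun x _ => hC x) (mem_univ a) (mem_univ b)
  have hTaylor := abs_sub_sub_mul_le_sq_of_lipschitz hF' hLip
  have hf_le : ∀ y, f y ≤ 1 + C := fun y => by
    have := hTaylor y 1
    rw [abs_le] at this
    linarith [hF01 y, hF01 (y + 1)]
  have hf_meas : Measurable f := (Differentiable.continuous hf').measurable
  have hint : ∀ Δ, Integrable (fun y => F (y + Δ) - F y) μ := fun Δ =>
    .of_bound (by fun_prop) 1 (.of_forall fun y => by
      rw [Real.norm_eq_abs, abs_le]; constructor <;> linarith [hF01 y, hF01 (y + Δ)])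
  have hfint : Integrable f μ := .of_bound hf_meas.aestronglyMeasurable (1 + C)
    (.of_forall fun y => by rw [Real.norm_eq_abs, abs_of_nonneg (hf0 y)]; exact hf_le y)
  have hsq : ∫ y, f y ∂μ = ∫ y, f y ^ 2 := by
    rw [hdens, integral_withDensity_eq_integral_toReal_smul (by fun_prop)
      (.of_forall fun _ => ENNReal.ofReal_lt_top)]
    simp only [ENNReal.toReal_ofReal (hf0 _), smul_eq_mul, sq]
  rw [← hsq]
  exact (tendsto_integral_slope_of_abs_sub_sub_mul_le hint hfint hTaylor).mono_left
    (nhdsWithin_mono _ fun Δ hΔ => ne_of_gt hΔ)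
end

section
/- There exists a universal constant K > 0 such that the following holds. Let n ≥ 2, C > 0, and let (ξ_{i,j})_{1≤i,j≤n} be real random variables on a probability space such that for all integers 0 ≤ q ≤ p ≤ n and 0 ≤ h ≤ l ≤ n, E[ ( Σ_{i=q+1}^{p} Σ_{j=h+1}^{l} ξ_{i,j} )² ] ≤ C (p−q)(l−h). Then for every ε > 0, P( max_{1≤k≤n} max_{1≤l≤n} | Σ_{i=1}^{k} Σ_{j=1}^{l} ξ_{i,j} | ≥ ε n^{3/2} ) ≤ K C ε^{−2} n^{−1/3}. -/
/-!
Dyadic chaining. For `k < 2 ^ N`, the interval `(0, k]` is the disjoint union of at most `N`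
dyadic intervals `(i 2^a, (i+1) 2^a] ⊆ (0, k]`, one for each nonzero binary digit of `k`. Hence
every rectangle sum `S_{k,l}` is a sum of at most `N²` dyadic block sums, and by Cauchy–Schwarz
`S_{k,l}² ≤ N² E`, where `E` is the sum of the squares of all dyadic block sums inside `[1, n]²`.
The moment hypothesis bounds the expectation of a block square by `C` times its area, and at each
pair of levels the blocks tile a subrectangle of `[1, n]²`, so `𝔼 E ≤ C (N n)²`. Chebyshev's
inequality gives the bound `C N⁴ / (ε² n)` with `N = ⌊log₂ n⌋ + 1`, and `N² ≤ 36 n^{1/3}`.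
-/

open MeasureTheory Finset

def dyadicInterval (I : Σ _ : ℕ, ℕ) : Finset ℕ :=
  Ioc (I.2 * 2 ^ I.1) ((I.2 + 1) * 2 ^ I.1)

def dyadicIntervals (n N : ℕ) : Finset (Σ _ : ℕ, ℕ) :=
  (range N).sigma fun a => range (n / 2 ^ a)

theorem mem_dyadicIntervals {n N a i : ℕ} :
    (⟨a, i⟩ : Σ _ : ℕ, ℕ) ∈ dyadicIntervals n N ↔ a < N ∧ (i + 1) * 2 ^ a ≤ n := by
  rw [dyadicIntervals, mem_sigma, mem_range, mem_range, Nat.lt_iff_add_one_le (m := i),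
    Nat.le_div_iff_mul_le (by positivity)]

theorem dyadicIntervals_mono {k n : ℕ} (h : k ≤ n) (N : ℕ) :
    dyadicIntervals k N ⊆ dyadicIntervals n N := by
  rintro ⟨a, i⟩
  simp only [mem_dyadicIntervals]
  omega

theorem sum_two_pow_dyadicIntervals_le (n N : ℕ) :
    ∑ I ∈ dyadicIntervals n N, 2 ^ I.1 ≤ N * n := by
  rw [dyadicIntervals, sum_sigma]
  calc ∑ a ∈ range N, ∑ _i ∈ range (n / 2 ^ a), 2 ^ a
      = ∑ a ∈ range N, n / 2 ^ a * 2 ^ a := by simp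
    _ ≤ ∑ _a ∈ range N, n := sum_le_sum fun a _ => Nat.div_mul_le_self n (2 ^ a)
    _ = N * n := by simp

theorem Ioc_div_two_pow_mul (k a : ℕ) :
    Ioc (k / 2 ^ (a + 1) * 2 ^ (a + 1)) (k / 2 ^ a * 2 ^ a) =
      if k / 2 ^ a % 2 = 1 then dyadicInterval ⟨a, k / 2 ^ a - 1⟩ else ∅ := by
  have hdiv : k / 2 ^ (a + 1) * 2 ^ (a + 1) = k / 2 ^ a / 2 * 2 * 2 ^ a := by
    rw [pow_succ, ← Nat.div_div_eq_div_mul]; ring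
  rw [hdiv, dyadicInterval]
  have := Nat.div_add_mod (k / 2 ^ a) 2
  split_ifs with h
  · dsimp only
    congr 2 <;> omega
  · rw [show k / 2 ^ a / 2 * 2 = k / 2 ^ a by omega, Ioc_self]

theorem div_two_pow_succ_mul_le (k a : ℕ) :
    k / 2 ^ (a + 1) * 2 ^ (a + 1) ≤ k / 2 ^ a * 2 ^ a := by
  rw [pow_succ, ← Nat.div_div_eq_div_mul, Nat.mul_comm (2 ^ a) 2, ← mul_assoc]
  exact Nat.mul_le_mul_right _ (Nat.div_mul_le_self _ _)

theorem sum_range_Ioc_div_two_pow_mul {M : Type*} [AddCommMonoid M] (f : ℕ → M) (k N : ℕ) :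
    ∑ a ∈ range N, ∑ x ∈ Ioc (k / 2 ^ (a + 1) * 2 ^ (a + 1)) (k / 2 ^ a * 2 ^ a), f x =
      ∑ x ∈ Ioc (k / 2 ^ N * 2 ^ N) k, f x := by
  induction N with
  | zero => simp
  | succ N ih =>
    rw [sum_range_succ, ih]
    exact (add_comm _ _).trans <|
      sum_Ioc_consecutive f (div_two_pow_succ_mul_le k N) (Nat.div_mul_le_self k _)

def dyadicCover (k N : ℕ) : Finset (Σ _ : ℕ, ℕ) :=
  {a ∈ range N | k / 2 ^ a % 2 = 1}.image fun a => ⟨a, k / 2 ^ a - 1⟩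

theorem dyadicCover_subset (k N : ℕ) : dyadicCover k N ⊆ dyadicIntervals k N := by
  simp only [dyadicCover, subset_iff, mem_image, mem_filter, mem_range]
  rintro _ ⟨a, ⟨ha, hodd⟩, rfl⟩
  rw [mem_dyadicIntervals, Nat.sub_add_cancel (Nat.pos_of_ne_zero fun h => by simp [h] at hodd)]
  exact ⟨ha, Nat.div_mul_le_self k _⟩

theorem card_dyadicCover_le (k N : ℕ) : #(dyadicCover k N) ≤ N :=
  card_image_le.trans ((card_filter_le _ _).trans (card_range N).le)

theorem sum_Ioc_zero_eq_sum_dyadicCover {M : Type*} [AddCommMonoid M] (f : ℕ → M) {k N : ℕ}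
    (hk : k < 2 ^ N) :
    ∑ x ∈ Ioc 0 k, f x = ∑ I ∈ dyadicCover k N, ∑ x ∈ dyadicInterval I, f x := by
  rw [dyadicCover, sum_image (by simp +contextual [Set.InjOn]), sum_filter,
    ← zero_mul (2 ^ N), ← Nat.div_eq_of_lt hk, ← sum_range_Ioc_div_two_pow_mul]
  refine sum_congr rfl fun a _ => ?_
  rw [Ioc_div_two_pow_mul]
  split_ifs <;> simp

def dyadicEnergy (f : ℕ → ℕ → ℝ) (n N : ℕ) : ℝ :=
  ∑ IJ ∈ dyadicIntervals n N ×ˢ dyadicIntervals n N,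
    (∑ x ∈ dyadicInterval IJ.1, ∑ y ∈ dyadicInterval IJ.2, f x y) ^ 2

theorem sq_sum_Ioc_Ioc_le_dyadicEnergy (f : ℕ → ℕ → ℝ) {n N k l : ℕ} (hn : n < 2 ^ N)
    (hk : k ≤ n) (hl : l ≤ n) :
    (∑ x ∈ Ioc 0 k, ∑ y ∈ Ioc 0 l, f x y) ^ 2 ≤ N ^ 2 * dyadicEnergy f n N := by
  set S := dyadicCover k N ×ˢ dyadicCover l N
  have hsplit : ∑ x ∈ Ioc 0 k, ∑ y ∈ Ioc 0 l, f x y =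
      ∑ IJ ∈ S, ∑ x ∈ dyadicInterval IJ.1, ∑ y ∈ dyadicInterval IJ.2, f x y := by
    simp_rw [sum_Ioc_zero_eq_sum_dyadicCover _ (hl.trans_lt hn),
      sum_Ioc_zero_eq_sum_dyadicCover _ (hk.trans_lt hn), S, sum_product]
    exact sum_congr rfl fun I _ => sum_comm
  have hS : S ⊆ dyadicIntervals n N ×ˢ dyadicIntervals n N :=
    product_subset_product ((dyadicCover_subset k N).trans (dyadicIntervals_mono hk N))
      ((dyadicCover_subset l N).trans (dyadicIntervals_mono hl N))
  have hcard : (#S : ℝ) ≤ N ^ 2 := by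
    rw [card_product, sq]
    exact_mod_cast Nat.mul_le_mul (card_dyadicCover_le k N) (card_dyadicCover_le l N)
  rw [hsplit]
  exact sq_sum_le_card_mul_sum_sq.trans <| mul_le_mul hcard
    (sum_le_sum_of_subset_of_nonneg hS fun _ _ _ => sq_nonneg _)
    (sum_nonneg fun _ _ => sq_nonneg _) (by positivity)

theorem sq_le_dyadicEnergy_of_le_sup' (f : ℕ → ℕ → ℝ) {n N : ℕ} (hn : n < 2 ^ N)
    (hne : (Icc 1 n).Nonempty) {t : ℝ} (ht : 0 ≤ t)
    (h : t ≤ (Icc 1 n).sup' hne fun k => (Icc 1 n).sup' hne fun l =>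
        |∑ i ∈ Icc 1 k, ∑ j ∈ Icc 1 l, f i j|) :
    t ^ 2 ≤ N ^ 2 * dyadicEnergy f n N := by
  obtain ⟨k, hk, h⟩ := (le_sup'_iff hne).1 h
  obtain ⟨l, hl, h⟩ := (le_sup'_iff hne).1 h
  have hIcc (m : ℕ) : Icc 1 m = Ioc 0 m := Icc_add_one_left_eq_Ioc 0 m
  rw [hIcc, hIcc] at h
  calc t ^ 2 ≤ (∑ i ∈ Ioc 0 k, ∑ j ∈ Ioc 0 l, f i j) ^ 2 :=
        (pow_le_pow_left₀ ht h 2).trans_eq (sq_abs _)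
    _ ≤ N ^ 2 * dyadicEnergy f n N :=
      sq_sum_Ioc_Ioc_le_dyadicEnergy f hn (mem_Icc.1 hk).2 (mem_Icc.1 hl).2

theorem measureReal_le_sum_integral_sq_div {Ω ι : Type*} [MeasurableSpace Ω] {P : Measure Ω}
    {s : Finset ι} {Y : ι → Ω → ℝ} (hY : ∀ i ∈ s, Integrable (fun ω => Y i ω ^ 2) P) {δ : ℝ}
    (hδ : 0 < δ) :
    P.real {ω | δ ≤ ∑ i ∈ s, Y i ω ^ 2} ≤ (∑ i ∈ s, ∫ ω, Y i ω ^ 2 ∂P) / δ := by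
  rw [le_div_iff₀ hδ, mul_comm, ← integral_finsetSum s hY]
  exact mul_meas_ge_le_integral_of_nonneg (Filter.Eventually.of_forall fun ω => by positivity)
    (integrable_finsetSum s hY) δ

theorem sum_dyadicIntervals_mul_two_pow_le {C : ℝ} (hC : 0 ≤ C) (n N : ℕ) :
    ∑ IJ ∈ dyadicIntervals n N ×ˢ dyadicIntervals n N, C * 2 ^ IJ.1.1 * 2 ^ IJ.2.1
      ≤ C * (N * n) ^ 2 := by
  have h : ∑ I ∈ dyadicIntervals n N, (2 : ℝ) ^ I.1 ≤ N * n := by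
    exact_mod_cast sum_two_pow_dyadicIntervals_le n N
  calc _ = C * ((∑ I ∈ dyadicIntervals n N, (2 : ℝ) ^ I.1) *
        ∑ J ∈ dyadicIntervals n N, (2 : ℝ) ^ J.1) := by
        rw [sum_product, sum_mul_sum, mul_sum]
        simp_rw [mul_sum, mul_assoc]
    _ ≤ C * ((N * n) * (N * n)) := by gcongr
    _ = C * (N * n) ^ 2 := by ring

theorem succ_pow_le_pow_mul_two_pow {k : ℕ} (hk : 0 < k) (m : ℕ) :
    (m + 1) ^ k ≤ k ^ k * 2 ^ m :=
  calc (m + 1) ^ k ≤ (k * (m / k + 1)) ^ k :=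
        Nat.pow_le_pow_left (Nat.lt_mul_div_succ m hk) k
    _ = k ^ k * (m / k + 1) ^ k := mul_pow _ _ _
    _ ≤ k ^ k * (2 ^ (m / k)) ^ k :=
        Nat.mul_le_mul_left _ (Nat.pow_le_pow_left Nat.lt_two_pow_self k)
    _ ≤ k ^ k * 2 ^ m := by
        rw [← pow_mul]
        exact Nat.mul_le_mul_left _ (Nat.pow_le_pow_right two_pos (Nat.div_mul_le_self m k))

theorem sq_log_two_succ_le {n : ℕ} (hn : 0 < n) {r : ℝ} (hr : 0 ≤ r) (hrn : r ^ 3 = n) :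
    ((Nat.log 2 n + 1 : ℕ) : ℝ) ^ 2 ≤ 36 * r := by
  have hnat : (Nat.log 2 n + 1) ^ 6 ≤ 6 ^ 6 * n :=
    (succ_pow_le_pow_mul_two_pow (by norm_num) _).trans
      (Nat.mul_le_mul_left _ (Nat.pow_log_le_self 2 hn.ne'))
  refine le_of_pow_le_pow_left₀ three_ne_zero (by positivity) ?_
  calc (((Nat.log 2 n + 1 : ℕ) : ℝ) ^ 2) ^ 3 = (((Nat.log 2 n + 1) ^ 6 : ℕ) : ℝ) := by
        push_cast; ring
    _ ≤ ((6 ^ 6 * n : ℕ) : ℝ) := by exact_mod_cast hnat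
    _ = (36 * r) ^ 3 := by rw [mul_pow, hrn]; push_cast; ring

theorem chebyshev_rate_le {n : ℕ} (hn : 0 < n) {C ε : ℝ} (hC : 0 ≤ C) (hε : 0 < ε) :
    C * ((Nat.log 2 n + 1 : ℕ) * n) ^ 2 /
        ((ε * (n : ℝ) ^ ((3 : ℝ) / 2)) ^ 2 / ((Nat.log 2 n + 1 : ℕ) : ℝ) ^ 2)
      ≤ 1296 * C * ε⁻¹ ^ 2 * ((n : ℝ) ^ ((1 : ℝ) / 3))⁻¹ := by
  have hn0 : (0 : ℝ) < n := by positivity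
  have h32 : ((n : ℝ) ^ ((3 : ℝ) / 2)) ^ 2 = n ^ 3 := by
    rw [← Real.rpow_natCast, ← Real.rpow_mul hn0.le]; norm_num
  have hrn : ((n : ℝ) ^ ((1 : ℝ) / 3)) ^ 3 = n := by
    rw [show (1 : ℝ) / 3 = ((3 : ℕ) : ℝ)⁻¹ by norm_num]
    exact Real.rpow_inv_natCast_pow hn0.le three_ne_zero
  set r := (n : ℝ) ^ ((1 : ℝ) / 3)
  have hr : 0 < r := by positivity
  set N : ℝ := ((Nat.log 2 n + 1 : ℕ) : ℝ)
  calc C * (N * n) ^ 2 / ((ε * (n : ℝ) ^ ((3 : ℝ) / 2)) ^ 2 / N ^ 2)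
      = C * (N ^ 2) ^ 2 / (ε ^ 2 * r ^ 3) := by
        rw [mul_pow ε, h32, ← hrn]; field_simp
    _ ≤ C * (36 * r) ^ 2 / (ε ^ 2 * r ^ 3) := by
        gcongr; exact sq_log_two_succ_le hn hr.le hrn
    _ = 1296 * C * ε⁻¹ ^ 2 * r⁻¹ := by field_simp; ring

theorem integral_sq_dyadicBlock_le {Ω : Type*} [MeasurableSpace Ω] {P : Measure Ω} {n : ℕ}
    {C : ℝ} {ξ : ℕ → ℕ → Ω → ℝ}
    (hξ : ∀ q p h l : ℕ, q ≤ p → p ≤ n → h ≤ l → l ≤ n →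
      Integrable (fun ω => (∑ i ∈ Icc (q + 1) p, ∑ j ∈ Icc (h + 1) l, ξ i j ω) ^ 2) P ∧
      ∫ ω, (∑ i ∈ Icc (q + 1) p, ∑ j ∈ Icc (h + 1) l, ξ i j ω) ^ 2 ∂P
        ≤ C * ((p : ℝ) - (q : ℝ)) * ((l : ℝ) - (h : ℝ)))
    {N : ℕ} {IJ : (Σ _ : ℕ, ℕ) × (Σ _ : ℕ, ℕ)}
    (hIJ : IJ ∈ dyadicIntervals n N ×ˢ dyadicIntervals n N) :
    Integrable (fun ω => (∑ x ∈ dyadicInterval IJ.1, ∑ y ∈ dyadicInterval IJ.2, ξ x y ω) ^ 2) P ∧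
      ∫ ω, (∑ x ∈ dyadicInterval IJ.1, ∑ y ∈ dyadicInterval IJ.2, ξ x y ω) ^ 2 ∂P
        ≤ C * 2 ^ IJ.1.1 * 2 ^ IJ.2.1 := by
  obtain ⟨⟨a, i⟩, ⟨b, j⟩⟩ := IJ
  rw [mem_product, mem_dyadicIntervals, mem_dyadicIntervals] at hIJ
  obtain ⟨hI, hJ⟩ := hIJ
  have h := hξ (i * 2 ^ a) ((i + 1) * 2 ^ a) (j * 2 ^ b) ((j + 1) * 2 ^ b)
    (by gcongr; omega) hI.2 (by gcongr; omega) hJ.2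
  simp only [dyadicInterval, ← Icc_add_one_left_eq_Ioc]
  exact ⟨h.1, h.2.trans_eq (by push_cast; ring)⟩

/-- Maximal inequality for doubly indexed partial sums: there is a universal
constant `K > 0` such that whenever the partial sums of a square-integrable array
`ξ` over every index rectangle in `[1,n]²` have second moment bounded by
`C·(area of the rectangle)`, one has
`P( max_{1≤k,l≤n} |Σ_{i≤k} Σ_{j≤l} ξ_{i,j}| ≥ ε n^{3/2} ) ≤ K C ε⁻² n^{−1/3}`. -/
theorem stmt_11 :
    ∃ K : ℝ, 0 < K ∧
      ∀ (Ω : Type) (_ : MeasurableSpace Ω) (P : Measure Ω),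
        IsProbabilityMeasure P →
        ∀ (n : ℕ) (hn : 2 ≤ n),
        ∀ (C : ℝ), 0 < C →
        ∀ (ξ : ℕ → ℕ → Ω → ℝ),
        (∀ i j, Measurable (ξ i j)) →
        (∀ q p h l : ℕ, q ≤ p → p ≤ n → h ≤ l → l ≤ n →
          Integrable
            (fun ω => (∑ i ∈ Icc (q + 1) p, ∑ j ∈ Icc (h + 1) l, ξ i j ω) ^ 2) P ∧
          ∫ ω, (∑ i ∈ Icc (q + 1) p, ∑ j ∈ Icc (h + 1) l, ξ i j ω) ^ 2 ∂P
            ≤ C * ((p : ℝ) - (q : ℝ)) * ((l : ℝ) - (h : ℝ))) →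
        ∀ ε : ℝ, 0 < ε →
          (P {ω | ε * (n : ℝ) ^ ((3 : ℝ) / 2)
              ≤ (Icc 1 n).sup' (Finset.nonempty_Icc.mpr (by omega)) (fun k =>
                  (Icc 1 n).sup' (Finset.nonempty_Icc.mpr (by omega)) (fun l =>
                    |∑ i ∈ Icc 1 k, ∑ j ∈ Icc 1 l, ξ i j ω|))}).toReal
            ≤ K * C * ε⁻¹ ^ 2 * ((n : ℝ) ^ ((1 : ℝ) / 3))⁻¹ := by
  refine ⟨1296, by norm_num, fun Ω _ P _ n hn C hC ξ _ hξ ε hε => ?_⟩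
  set N := Nat.log 2 n + 1
  set D := dyadicIntervals n N
  set δ := (ε * (n : ℝ) ^ ((3 : ℝ) / 2)) ^ 2 / N ^ 2
  have hδ : 0 < δ := by positivity
  refine (measureReal_mono (s₂ := {ω | δ ≤ dyadicEnergy (fun x y => ξ x y ω) n N})
    fun ω hω => ?_).trans ?_
  · exact (div_le_iff₀' (by positivity)).2 <| sq_le_dyadicEnergy_of_le_sup' _
      (Nat.lt_pow_succ_log_self one_lt_two n) _ (by positivity) hω
  calc P.real {ω | δ ≤ dyadicEnergy (fun x y => ξ x y ω) n N}
      ≤ (∑ IJ ∈ D ×ˢ D, ∫ ω, (∑ x ∈ dyadicInterval IJ.1, ∑ y ∈ dyadicInterval IJ.2,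
          ξ x y ω) ^ 2 ∂P) / δ :=
        measureReal_le_sum_integral_sq_div
          (fun IJ h => (integral_sq_dyadicBlock_le hξ h).1) hδ
    _ ≤ C * (N * n) ^ 2 / δ := by
        gcongr
        refine (sum_le_sum fun IJ h => ?_).trans (sum_dyadicIntervals_mul_two_pow_le hC.le n N)
        exact (integral_sq_dyadicBlock_le hξ h).2
    _ ≤ 1296 * C * ε⁻¹ ^ 2 * ((n : ℝ) ^ ((1 : ℝ) / 3))⁻¹ :=
        chebyshev_rate_le (by omega) hC.le hε
end
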